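/- arXiv:1306.5039 — 2 statements merged into one kernel-verified Lean document; each statement's English description precedes it below -/
import Mathlib

section
/- For the logistic map g_a with a = 3.71 and initial value x₀ = 1/2^n (n ≥ 1), there exists an integer k with 0 ≤ k ≤ 2n such that g_a^k(x₀) > 1/2. -/
noncomputable def logistic (a : ℝ) (x : ℝ) : ℝ := a * x * (1 - x)

theorem logistic_amplifies_in_2n_steps :
    ∀ n : ℕ, 1 ≤ n →
      ∃ k : ℕ, k ≤ 2 * n ∧ (logistic 3.71)^[k] (1 / 2 ^ n) > 1/2 := by
  intro n hn
  by_contra hcon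
  push_neg at hcon
  have key : ∀ k, k ≤ 2 * n → (1.855 : ℝ) ^ k * (1 / 2 ^ n) ≤ (logistic 3.71)^[k] (1 / 2 ^ n) := by
    intro k
    induction k with
    | zero => intro _; simp
    | succ m ih =>
      intro hk
      have hm : m ≤ 2 * n := Nat.le_of_succ_le hk
      have ihm := ih hm
      have hle : (logistic 3.71)^[m] (1 / 2 ^ n) ≤ 1 / 2 := hcon m hm
      have hpos : (0 : ℝ) < (1.855 : ℝ) ^ m * (1 / 2 ^ n) := by positivity
      rw [Function.iterate_succ_apply']
      set y := (logistic 3.71)^[m] (1 / 2 ^ n) with hy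
      have hy0 : (0 : ℝ) < y := lt_of_lt_of_le hpos ihm
      have hlog : logistic 3.71 y = 3.71 * y * (1 - y) := rfl
      rw [hlog]
      have h1 : (1 : ℝ) - y ≥ 1 / 2 := by linarith
      calc (1.855 : ℝ) ^ (m + 1) * (1 / 2 ^ n)
          = 1.855 * ((1.855 : ℝ) ^ m * (1 / 2 ^ n)) := by ring
        _ ≤ 1.855 * y := by nlinarith
        _ ≤ 3.71 * y * (1 - y) := by nlinarith
  have h2n := key (2 * n) le_rfl
  have hle := hcon (2 * n) le_rfl
  have heq : (1.855 : ℝ) ^ (2 * n) * (1 / 2 ^ n) = ((1.855 : ℝ) ^ 2 / 2) ^ n := by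
    rw [div_pow, ← pow_mul, mul_one_div]
  have hb : (1 : ℝ) ≤ (1.855 : ℝ) ^ 2 / 2 := by norm_num
  have hge : (1 : ℝ) ≤ ((1.855 : ℝ) ^ 2 / 2) ^ n := one_le_pow₀ hb
  rw [heq] at h2n
  linarith
end

section
/- Distinguishability of amplified states: for a = 3.71 and p = 1/2^n, there exists k ≤ 2n with g_a^k(p) > 1/2, while g_a^k(0) = 0 for all k; hence the chaos amplifier distinguishes p = 0 from p = 1/2^n within 2n iterations. -/
lemma logistic_grow {x : ℝ} (hx : 0 < x) (hx2 : x ≤ 1/2) :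
    1.855 * x ≤ logistic 3.71 x := by
  unfold logistic
  nlinarith

lemma grow_aux (p : ℝ) (hp : 0 < p) :
    ∀ m : ℕ, (∃ k : ℕ, k ≤ m ∧ (logistic 3.71)^[k] p > 1/2) ∨
      (0 < (logistic 3.71)^[m] p ∧ 1.855 ^ m * p ≤ (logistic 3.71)^[m] p) := by
  intro m
  induction m with
  | zero => right; simpa using hp
  | succ m ih =>
    rcases ih with ⟨k, hk, hgt⟩ | ⟨hpos, hge⟩
    · exact Or.inl ⟨k, by omega, hgt⟩
    by_cases h : (logistic 3.71)^[m] p > 1/2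
    · exact Or.inl ⟨m, by omega, h⟩
    · right
      push_neg at h
      rw [Function.iterate_succ_apply']
      have h1 : 1.855 * (logistic 3.71)^[m] p ≤ logistic 3.71 ((logistic 3.71)^[m] p) :=
        logistic_grow hpos h
      constructor
      · nlinarith
      · calc 1.855 ^ (m+1) * p = 1.855 * (1.855 ^ m * p) := by ring
          _ ≤ 1.855 * (logistic 3.71)^[m] p := by nlinarith
          _ ≤ _ := h1

theorem chaosAmp_distinguishes :
    ∀ n : ℕ, 1 ≤ n →
      (∃ k : ℕ, k ≤ 2 * n ∧ (logistic 3.71)^[k] (1 / 2 ^ n) > 1/2) ∧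
      (∀ k : ℕ, (logistic 3.71)^[k] 0 = 0) := by
  intro n hn
  constructor
  · have hp : (0:ℝ) < 1 / 2 ^ n := by positivity
    rcases grow_aux (1 / 2 ^ n) hp (2 * n) with h | ⟨_, hge⟩
    · exact h
    · refine ⟨2 * n, le_refl _, ?_⟩
      have h2 : (2:ℝ) ^ n ≤ 1.855 ^ (2 * n) := by
        rw [pow_mul]
        apply pow_le_pow_left₀ (by norm_num)
        norm_num
      have : (1:ℝ) ≤ 1.855 ^ (2 * n) * (1 / 2 ^ n) := by
        rw [mul_one_div, le_div_iff₀ (by positivity)]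
        linarith
      linarith
  · intro k
    induction k with
    | zero => simp
    | succ k ih => rw [Function.iterate_succ_apply', ih]; simp [logistic]
end
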